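/- arXiv:1402.1414 — 3 statements merged into one kernel-verified Lean document; each statement's English description precedes it below -/
import Mathlib

section
/- Let 0 < γ < α ≤ 1, let a < b, and let f : [a,b] → ℝ satisfy |f(u) − f(v)| ≤ H |u − v|^α for all u, v ∈ [a,b], where H ≥ 0. Then for every s ∈ (a,b], the left fractional derivative D_{a+}^γ f_a(s) is well defined (the integral in its definition converges absolutely) and |D_{a+}^γ f_a(s)| ≤ (H / Γ(1−γ)) (1 + γ/(α−γ)) (s − a)^{α−γ}. -/
/-!
The Hölder bound `|f s - f y| ≤ H (s - y)^α` turns the integrand into something dominated by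
`H (s - y)^(α - γ - 1)`, which is integrable on `[a, s]` because `α - γ - 1 > -1`, with integral
`H (s - a)^(α - γ) / (α - γ)`. The boundary term is at most `H (s - a)^(α - γ)` by the same bound
at `y = a`, and the two estimates add up to the claimed one.
-/

open MeasureTheory intervalIntegral

theorem holderOnWith_of_dist_le {X Y : Type*} [PseudoMetricSpace X] [PseudoMetricSpace Y]
    {f : X → Y} {S : Set X} {H α : ℝ} (hH : 0 ≤ H) (hα : 0 ≤ α)
    (hf : ∀ x ∈ S, ∀ y ∈ S, dist (f x) (f y) ≤ H * dist x y ^ α) :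
    HolderOnWith ⟨H, hH⟩ ⟨α, hα⟩ f S := by
  intro x hx y hy
  calc edist (f x) (f y) ≤ ENNReal.ofReal (H * dist x y ^ α) := by
        rw [edist_dist]; exact ENNReal.ofReal_le_ofReal (hf x hx y hy)
    _ = _ := by
        rw [ENNReal.ofReal_mul hH, ← ENNReal.ofReal_rpow_of_nonneg dist_nonneg hα, ← edist_dist,
          ENNReal.ofReal_eq_coe_nnreal hH]
        rfl

theorem integral_sub_rpow {r : ℝ} (hr : -1 < r) (a s : ℝ) :
    ∫ y in a..s, (s - y) ^ r = (s - a) ^ (r + 1) / (r + 1) := by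
  rw [integral_comp_sub_left (fun x => x ^ r), sub_self, integral_rpow (Or.inl hr),
    Real.zero_rpow (by linarith), sub_zero]

theorem intervalIntegrable_sub_rpow {r : ℝ} (hr : -1 < r) (a s : ℝ) :
    IntervalIntegrable (fun y => (s - y) ^ r) volume a s := by
  simpa using ((intervalIntegrable_rpow' hr (a := 0) (b := s - a)).comp_sub_left s).symm

-- At `x = 0` the quotient is the junk value `g / 0 = 0`, since `0 ^ β = 0` for `β ≠ 0`.
theorem abs_div_rpow_le_of_abs_le {g x H α β : ℝ} (hx : 0 ≤ x) (hβ : β ≠ 0) (hH : 0 ≤ H)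
    (hg : |g| ≤ H * x ^ α) : |g / x ^ β| ≤ H * x ^ (α - β) := by
  rcases hx.eq_or_lt with rfl | hx
  · rw [Real.zero_rpow hβ, div_zero, abs_zero]
    positivity
  · have hxβ : 0 < x ^ β := Real.rpow_pos_of_pos hx β
    rwa [abs_div, abs_of_pos hxβ, div_le_iff₀ hxβ, mul_assoc, ← Real.rpow_add hx, sub_add_cancel]

section MarchaudIntegral

variable {f : ℝ → ℝ} {a s H α γ : ℝ}

theorem abs_sub_div_rpow_le (hH : 0 ≤ H) (hγ : -1 < γ)
    (hf : ∀ y ∈ Set.Icc a s, |f s - f y| ≤ H * (s - y) ^ α) :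
    ∀ y ∈ Set.Icc a s, |(f s - f y) / (s - y) ^ (γ + 1)| ≤ H * (s - y) ^ (α - γ - 1) := by
  intro y hy
  rw [sub_sub]
  exact abs_div_rpow_le_of_abs_le (sub_nonneg.2 hy.2) (by linarith) hH (hf y hy)

theorem intervalIntegrable_sub_div_rpow (has : a ≤ s) (hH : 0 ≤ H) (hγ : -1 < γ)
    (hγα : γ < α) (hcont : ContinuousOn f (Set.Ioo a s))
    (hf : ∀ y ∈ Set.Icc a s, |f s - f y| ≤ H * (s - y) ^ α) :
    IntervalIntegrable (fun y => (f s - f y) / (s - y) ^ (γ + 1)) volume a s := by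
  have hdom : IntegrableOn (fun y => H * (s - y) ^ (α - γ - 1)) (Set.Ioo a s) :=
    (((intervalIntegrable_sub_rpow (by linarith) a s).const_mul H).1).mono_set
      Set.Ioo_subset_Ioc_self
  have hmeas : ContinuousOn (fun y => (f s - f y) / (s - y) ^ (γ + 1)) (Set.Ioo a s) :=
    (continuousOn_const.sub hcont).div
      ((continuousOn_const.sub continuousOn_id).rpow_const
        fun y hy => Or.inl (sub_pos.2 hy.2).ne')
      fun y hy => (Real.rpow_pos_of_pos (sub_pos.2 hy.2) _).ne'
  rw [intervalIntegrable_iff_integrableOn_Ioc_of_le has, integrableOn_Ioc_iff_integrableOn_Ioo]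
  refine hdom.mono' (hmeas.aestronglyMeasurable measurableSet_Ioo) ?_
  filter_upwards [ae_restrict_mem measurableSet_Ioo] with y hy
  exact abs_sub_div_rpow_le hH hγ hf y (Set.Ioo_subset_Icc_self hy)

theorem abs_integral_sub_div_rpow_le (has : a ≤ s) (hH : 0 ≤ H) (hγ : -1 < γ)
    (hγα : γ < α) (hcont : ContinuousOn f (Set.Ioo a s))
    (hf : ∀ y ∈ Set.Icc a s, |f s - f y| ≤ H * (s - y) ^ α) :
    |∫ y in a..s, (f s - f y) / (s - y) ^ (γ + 1)| ≤ H * ((s - a) ^ (α - γ) / (α - γ)) :=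
  calc |∫ y in a..s, (f s - f y) / (s - y) ^ (γ + 1)|
      ≤ ∫ y in a..s, |(f s - f y) / (s - y) ^ (γ + 1)| := abs_integral_le_integral_abs has
    _ ≤ ∫ y in a..s, H * (s - y) ^ (α - γ - 1) :=
        integral_mono_on has (intervalIntegrable_sub_div_rpow has hH hγ hγα hcont hf).abs
          ((intervalIntegrable_sub_rpow (by linarith) a s).const_mul H)
          (abs_sub_div_rpow_le hH hγ hf)
    _ = H * ((s - a) ^ (α - γ) / (α - γ)) := by
        rw [intervalIntegral.integral_const_mul, integral_sub_rpow (by linarith), sub_add_cancel]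

end MarchaudIntegral

theorem stmt_5_general (α γ a b H : ℝ) (hγ0 : 0 < γ) (hγα : γ < α) (hα1 : α ≤ 1)
    (hH : 0 ≤ H) (f : ℝ → ℝ)
    (hf : ∀ u ∈ Set.Icc a b, ∀ v ∈ Set.Icc a b, |f u - f v| ≤ H * |u - v| ^ α)
    (s : ℝ) (hs : s ∈ Set.Ioc a b) :
    IntervalIntegrable (fun y => (f s - f y) / (s - y) ^ (γ + 1)) volume a s ∧
    |(1 / Real.Gamma (1 - γ)) *
        ((f s - f a) / (s - a) ^ γ + γ * ∫ y in a..s, (f s - f y) / (s - y) ^ (γ + 1))|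
      ≤ H / Real.Gamma (1 - γ) * (1 + γ / (α - γ)) * (s - a) ^ (α - γ) := by
  obtain ⟨has, hsb⟩ := hs
  have hα : 0 < α := hγ0.trans hγα
  have hcont : ContinuousOn f (Set.Ioo a s) :=
    ((holderOnWith_of_dist_le hH hα.le (by simpa only [Real.dist_eq] using hf)).continuousOn
      hα).mono (Set.Ioo_subset_Icc_self.trans (Set.Icc_subset_Icc_right hsb))
  have hfs : ∀ y ∈ Set.Icc a s, |f s - f y| ≤ H * (s - y) ^ α := fun y hy => by
    have := hf s ⟨has.le, hsb⟩ y ⟨hy.1, hy.2.trans hsb⟩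
    rwa [abs_of_nonneg (sub_nonneg.2 hy.2)] at this
  refine ⟨intervalIntegrable_sub_div_rpow has.le hH (by linarith) hγα hcont hfs, ?_⟩
  have hΓ : 0 < Real.Gamma (1 - γ) := Real.Gamma_pos_of_pos (by linarith)
  have hfirst :=
    abs_div_rpow_le_of_abs_le (sub_nonneg.2 has.le) hγ0.ne' hH (hfs a ⟨le_rfl, has.le⟩)
  have hsecond := abs_integral_sub_div_rpow_le has.le hH (by linarith) hγα hcont hfs
  set A := (f s - f a) / (s - a) ^ γ
  set I := ∫ y in a..s, (f s - f y) / (s - y) ^ (γ + 1)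
  calc |1 / Real.Gamma (1 - γ) * (A + γ * I)|
      ≤ 1 / Real.Gamma (1 - γ) * (|A| + γ * |I|) := by
        rw [abs_mul, abs_of_pos (by positivity)]
        gcongr
        exact (abs_add_le _ _).trans_eq (by rw [abs_mul, abs_of_pos hγ0])
    _ ≤ 1 / Real.Gamma (1 - γ) *
          (H * (s - a) ^ (α - γ) + γ * (H * ((s - a) ^ (α - γ) / (α - γ)))) := by
        gcongr
    _ = H / Real.Gamma (1 - γ) * (1 + γ / (α - γ)) * (s - a) ^ (α - γ) := by
        ring

/-- If `f` is α-Hölder with constant `H` on `[a,b]` and `0 < γ < α ≤ 1`, then for every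
`s ∈ (a,b]` the left fractional derivative
`D_{a+}^γ f_a(s) = (1/Γ(1-γ)) [ (f(s)-f(a))/(s-a)^γ + γ ∫_a^s (f(s)-f(y))/(s-y)^{γ+1} dy ]`
is well defined (the integral converges absolutely) and
`|D_{a+}^γ f_a(s)| ≤ (H/Γ(1-γ)) (1 + γ/(α-γ)) (s-a)^{α-γ}`. -/
theorem stmt_5 (α γ a b H : ℝ) (hγ0 : 0 < γ) (hγα : γ < α) (hα1 : α ≤ 1)
    (hab : a < b) (hH : 0 ≤ H) (f : ℝ → ℝ)
    (hf : ∀ u ∈ Set.Icc a b, ∀ v ∈ Set.Icc a b, |f u - f v| ≤ H * |u - v| ^ α)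
    (s : ℝ) (hs : s ∈ Set.Ioc a b) :
    IntervalIntegrable (fun y => (f s - f y) / (s - y) ^ (γ + 1)) volume a s ∧
    |(1 / Real.Gamma (1 - γ)) *
        ((f s - f a) / (s - a) ^ γ + γ * ∫ y in a..s, (f s - f y) / (s - y) ^ (γ + 1))|
      ≤ H / Real.Gamma (1 - γ) * (1 + γ / (α - γ)) * (s - a) ^ (α - γ) :=
  stmt_5_general α γ a b H hγ0 hγα hα1 hH f hf s hs
end

section
/- Let γ ∈ (0,1). There exists a constant C > 0 depending only on γ such that for every integer m ≥ 1, every integer N ≥ 2 with b = t_N (where t_l = l/m), every step function g : [0, t_N] → ℝ with g(s) = g(t_{l−1}) for s ∈ [t_{l−1}, t_l), and every integer k with 1 ≤ k ≤ N−1: ∫_{t_{k−1}}^{t_k} |D_{b−}^{1−γ} g_{b−}(s)| ds ≤ C m^{−γ} [ Σ_{l=k+1}^{N} |g(t_{k−1}) − g(t_{l−1})| · |(l−1−k)^γ − 2(l−k)^γ + (l−k+1)^γ| + |g(t_{k−1}) − g(t_{N−1})| ( (N−k+1)^γ − (N−k)^γ ) ]. -/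
/-!
For `s` in the cell `(t_{k-1}, t_k)` the step function `g` equals `g(t_{k-1})` on `[s, t_k)`, so
the inner integral of `D_{b-}^{1-γ} g_{b-}` vanishes on `(s, t_k)` and is explicit on every
later cell:
`Γ(γ) D(s) = (g(t_{k-1}) - g(b-)) (b-s)^{γ-1}
  + ∑_l (g(t_{k-1}) - g(t_{l-1})) ((t_{l-1}-s)^{γ-1} - (t_l-s)^{γ-1})`.
For `γ < 1` each kernel difference is nonnegative, so the triangle inequality bounds `|D|` by the
same sum with `|g(t_{k-1}) - g(t_{l-1})|`, and this majorant integrates in closed form over the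
cell. On the uniform grid `t_l = l/m` the result is `m^{-γ} / (Γ(γ) γ)` times the bracket of the
statement, the cell terms being minus second differences of `j ↦ j^γ`.
-/

open MeasureTheory intervalIntegral

/-- The right fractional derivative of order `1-γ`, with `gb = g(b-)`:
`D_{b-}^{1-γ} g_{b-}(s) = (1/Γ(γ)) [ (g(s)-g(b-))/(b-s)^{1-γ}
  + (1-γ) ∫_s^b (g(s)-g(y))/(y-s)^{2-γ} dy ]`. -/
noncomputable def Dright (γ b gb : ℝ) (g : ℝ → ℝ) (s : ℝ) : ℝ :=
  (1 / Real.Gamma γ) *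
    ((g s - gb) / (b - s) ^ (1 - γ) + (1 - γ) * ∫ y in s..b, (g s - g y) / (y - s) ^ (2 - γ))

section IooCongr

variable {f f' : ℝ → ℝ} {a b : ℝ}

lemma intervalIntegral.integral_congr_Ioo (hab : a ≤ b) (h : Set.EqOn f f' (Set.Ioo a b)) :
    ∫ y in a..b, f y = ∫ y in a..b, f' y := by
  simp only [integral_of_le hab, integral_Ioc_eq_integral_Ioo]
  exact setIntegral_congr_fun measurableSet_Ioo h

lemma IntervalIntegrable.congr_Ioo (hf : IntervalIntegrable f volume a b) (hab : a ≤ b)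
    (h : Set.EqOn f f' (Set.Ioo a b)) : IntervalIntegrable f' volume a b := by
  rw [intervalIntegrable_iff_integrableOn_Ioo_of_le hab] at hf ⊢
  exact hf.congr_fun h measurableSet_Ioo

end IooCongr

section Kernels

variable {γ : ℝ}

lemma intervalIntegrable_const_sub_rpow (hγ : 0 < γ) (c a b : ℝ) :
    IntervalIntegrable (fun s => (c - s) ^ (γ - 1)) volume a b := by
  simpa using (intervalIntegrable_rpow' (a := c - a) (b := c - b)
    (by linarith : -1 < γ - 1)).comp_sub_left c

lemma integral_const_sub_rpow (hγ : 0 < γ) (c a b : ℝ) :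
    ∫ s in a..b, (c - s) ^ (γ - 1) = ((c - a) ^ γ - (c - b) ^ γ) / γ := by
  rw [integral_comp_sub_left (fun x => x ^ (γ - 1)) c, integral_rpow (Or.inl (by linarith)),
    sub_add_cancel]

lemma intervalIntegrable_sub_rpow_of_lt {s a b : ℝ} (p : ℝ) (hsa : s < a) (hab : a ≤ b) :
    IntervalIntegrable (fun y => (y - s) ^ p) volume a b := by
  refine ContinuousOn.intervalIntegrable (ContinuousOn.rpow_const (by fun_prop) fun y hy => ?_)
  rw [Set.uIcc_of_le hab] at hy
  exact Or.inl (by linarith [hy.1])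

lemma integral_sub_rpow_of_lt (hγ : γ ≠ 1) {s a b : ℝ} (hsa : s < a) (hab : a ≤ b) :
    ∫ y in a..b, (y - s) ^ (γ - 2) = ((b - s) ^ (γ - 1) - (a - s) ^ (γ - 1)) / (γ - 1) := by
  have hne : γ - 2 ≠ -1 := fun h => hγ (by linarith)
  rw [integral_comp_sub_right (fun x => x ^ (γ - 2)) s,
    integral_rpow (Or.inr ⟨hne, Set.notMem_uIcc_of_lt (by linarith) (by linarith)⟩)]
  ring_nf

end Kernels

section StepFunction

variable {γ : ℝ} {g : ℝ → ℝ}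

lemma step_kernel_eqOn {c v s a b : ℝ} (hsa : s ≤ a) (hg : ∀ y ∈ Set.Ico a b, g y = v) :
    Set.EqOn (fun y => (c - v) * (y - s) ^ (γ - 2)) (fun y => (c - g y) / (y - s) ^ (2 - γ))
      (Set.Ioo a b) := by
  intro y hy
  have hys : 0 ≤ y - s := by linarith [hy.1]
  simp only [hg y (Set.Ioo_subset_Ico_self hy), div_eq_mul_inv, ← Real.rpow_neg hys, neg_sub]

lemma intervalIntegrable_step_kernel {c v s a b : ℝ} (hsa : s < a) (hab : a ≤ b)
    (hg : ∀ y ∈ Set.Ico a b, g y = v) :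
    IntervalIntegrable (fun y => (c - g y) / (y - s) ^ (2 - γ)) volume a b :=
  ((intervalIntegrable_sub_rpow_of_lt _ hsa hab).const_mul _).congr_Ioo hab
    (step_kernel_eqOn hsa.le hg)

lemma integral_step_kernel (hγ : γ ≠ 1) {c v s a b : ℝ} (hsa : s < a) (hab : a ≤ b)
    (hg : ∀ y ∈ Set.Ico a b, g y = v) :
    (1 - γ) * ∫ y in a..b, (c - g y) / (y - s) ^ (2 - γ)
      = (c - v) * ((a - s) ^ (γ - 1) - (b - s) ^ (γ - 1)) := by
  have hγ' : γ - 1 ≠ 0 := sub_ne_zero.2 hγ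
  rw [← integral_congr_Ioo hab (step_kernel_eqOn hsa.le hg), intervalIntegral.integral_const_mul,
    integral_sub_rpow_of_lt hγ hsa hab]
  field_simp
  ring

variable {x : ℕ → ℝ} {k N : ℕ}

def IsStepOnCells (g : ℝ → ℝ) (x : ℕ → ℝ) (k N : ℕ) : Prop :=
  ∀ l ∈ Finset.Icc k N, ∀ y ∈ Set.Ico (x l) (x (l + 1)), g y = g (x l)

lemma integral_kernel_partition (hγ : γ ≠ 1) (hx : Monotone x) (hkN : k < N)
    (hg : IsStepOnCells g x k N) {s : ℝ} (hs : s ∈ Set.Ioo (x k) (x (k + 1))) :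
    (1 - γ) * ∫ y in s..x (N + 1), (g s - g y) / (y - s) ^ (2 - γ)
      = ∑ l ∈ Finset.Icc (k + 1) N,
          (g (x k) - g (x l)) * ((x l - s) ^ (γ - 1) - (x (l + 1) - s) ^ (γ - 1)) := by
  have hgk : ∀ y ∈ Set.Ico (x k) (x (k + 1)), g y = g (x k) :=
    hg k (Finset.mem_Icc.2 ⟨le_rfl, hkN.le⟩)
  have hgs : g s = g (x k) := hgk s (Set.Ioo_subset_Ico_self hs)
  have hcell : ∀ l, k < l → l ≤ N →
      s < x l ∧ x l ≤ x (l + 1) ∧ ∀ y ∈ Set.Ico (x l) (x (l + 1)), g y = g (x l) :=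
    fun l hkl hlN => ⟨hs.2.trans_le (hx hkl), hx l.le_succ, hg l (Finset.mem_Icc.2 ⟨hkl.le, hlN⟩)⟩
  have hcellInt : ∀ l ∈ Set.Ico (k + 1) (N + 1), IntervalIntegrable
      (fun y => (g s - g y) / (y - s) ^ (2 - γ)) volume (x l) (x (l + 1)) := fun l hl =>
    have h := hcell l hl.1 (Nat.lt_succ_iff.1 hl.2)
    intervalIntegrable_step_kernel h.1 h.2.1 h.2.2
  have hzero : Set.EqOn (fun _ => 0) (fun y => (g s - g y) / (y - s) ^ (2 - γ))
      (Set.Ioo s (x (k + 1))) := fun y hy => by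
    simp [hgs, hgk y ⟨hs.1.le.trans hy.1.le, hy.2⟩]
  have hfirst : IntervalIntegrable (fun y => (g s - g y) / (y - s) ^ (2 - γ)) volume
      s (x (k + 1)) := intervalIntegrable_const.congr_Ioo hs.2.le hzero
  have hle : k + 1 ≤ N + 1 := by omega
  rw [← integral_add_adjacent_intervals hfirst (.trans_iterate_Ico hle hcellInt),
    ← sum_integral_adjacent_intervals_Ico hle hcellInt, ← integral_congr_Ioo hs.2.le hzero,
    intervalIntegral.integral_zero, zero_add, Finset.mul_sum, Finset.Ico_add_one_right_eq_Icc]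
  refine Finset.sum_congr rfl fun l hl => ?_
  obtain ⟨hkl, hlN⟩ := Finset.mem_Icc.1 hl
  have h := hcell l hkl hlN
  rw [integral_step_kernel hγ h.1 h.2.1 h.2.2, hgs]

lemma Dright_partition_eq (hγ : γ ≠ 1) (hx : Monotone x) (hkN : k < N)
    (hg : IsStepOnCells g x k N) (gb : ℝ) {s : ℝ} (hs : s ∈ Set.Ioo (x k) (x (k + 1))) :
    Dright γ (x (N + 1)) gb g s
      = 1 / Real.Gamma γ * ((g (x k) - gb) * (x (N + 1) - s) ^ (γ - 1)
          + ∑ l ∈ Finset.Icc (k + 1) N,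
              (g (x k) - g (x l)) * ((x l - s) ^ (γ - 1) - (x (l + 1) - s) ^ (γ - 1))) := by
  have hgs : g s = g (x k) :=
    hg k (Finset.mem_Icc.2 ⟨le_rfl, hkN.le⟩) s (Set.Ioo_subset_Ico_self hs)
  have hbs : 0 ≤ x (N + 1) - s := by linarith [hs.2, hx (Nat.succ_le_succ hkN.le)]
  rw [Dright, integral_kernel_partition hγ hx hkN hg hs, hgs, div_eq_mul_inv (g (x k) - gb),
    ← Real.rpow_neg hbs, neg_sub]

lemma abs_Dright_partition_le (hγ0 : 0 < γ) (hγ1 : γ < 1) (hx : Monotone x) (hkN : k < N)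
    (hg : IsStepOnCells g x k N) (gb : ℝ) {s : ℝ} (hs : s ∈ Set.Ioo (x k) (x (k + 1))) :
    |Dright γ (x (N + 1)) gb g s|
      ≤ 1 / Real.Gamma γ * (|g (x k) - gb| * (x (N + 1) - s) ^ (γ - 1)
          + ∑ l ∈ Finset.Icc (k + 1) N,
              |g (x k) - g (x l)| * ((x l - s) ^ (γ - 1) - (x (l + 1) - s) ^ (γ - 1))) := by
  have hΓ : 0 ≤ 1 / Real.Gamma γ := one_div_nonneg.2 (Real.Gamma_pos_of_pos hγ0).le
  have hbs : 0 ≤ x (N + 1) - s := by linarith [hs.2, hx (Nat.succ_le_succ hkN.le)]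
  have hK : ∀ l ∈ Finset.Icc (k + 1) N,
      0 ≤ (x l - s) ^ (γ - 1) - (x (l + 1) - s) ^ (γ - 1) := fun l hl =>
    have hsl : s < x l := hs.2.trans_le (hx (Finset.mem_Icc.1 hl).1)
    sub_nonneg.2 (Real.rpow_le_rpow_of_nonpos (by linarith) (by linarith [hx l.le_succ])
      (by linarith))
  rw [Dright_partition_eq hγ1.ne hx hkN hg gb hs, abs_mul, abs_of_nonneg hΓ]
  gcongr
  refine (abs_add_le _ _).trans (add_le_add ?_ ((Finset.abs_sum_le_sum_abs _ _).trans ?_))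
  · rw [abs_mul, abs_of_nonneg (Real.rpow_nonneg hbs _)]
  · exact Finset.sum_le_sum fun l hl => by rw [abs_mul, abs_of_nonneg (hK l hl)]

lemma integral_abs_Dright_partition_le (hγ0 : 0 < γ) (hγ1 : γ < 1) (hx : Monotone x)
    (hkN : k < N) (hg : IsStepOnCells g x k N) (gb : ℝ) :
    ∫ s in x k..x (k + 1), |Dright γ (x (N + 1)) gb g s|
      ≤ 1 / (Real.Gamma γ * γ) *
          (|g (x k) - gb| * ((x (N + 1) - x k) ^ γ - (x (N + 1) - x (k + 1)) ^ γ)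
            + ∑ l ∈ Finset.Icc (k + 1) N, |g (x k) - g (x l)| *
                ((x l - x k) ^ γ - (x l - x (k + 1)) ^ γ
                  - ((x (l + 1) - x k) ^ γ - (x (l + 1) - x (k + 1)) ^ γ))) := by
  have hk : x k ≤ x (k + 1) := hx k.le_succ
  have hkernel := intervalIntegrable_const_sub_rpow hγ0 (a := x k) (b := x (k + 1))
  have hsum : IntervalIntegrable (fun s => ∑ l ∈ Finset.Icc (k + 1) N,
      |g (x k) - g (x l)| * ((x l - s) ^ (γ - 1) - (x (l + 1) - s) ^ (γ - 1))) volume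
      (x k) (x (k + 1)) := by
    simpa only [Finset.sum_fn] using IntervalIntegrable.sum (Finset.Icc (k + 1) N)
      fun l _ => ((hkernel (x l)).sub (hkernel (x (l + 1)))).const_mul |g (x k) - g (x l)|
  have hbound := ((hkernel (x (N + 1))).const_mul |g (x k) - gb|).add hsum |>.const_mul
    (1 / Real.Gamma γ)
  calc ∫ s in x k..x (k + 1), |Dright γ (x (N + 1)) gb g s|
      ≤ ∫ s in x k..x (k + 1), 1 / Real.Gamma γ * (|g (x k) - gb| * (x (N + 1) - s) ^ (γ - 1)
          + ∑ l ∈ Finset.Icc (k + 1) N,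
              |g (x k) - g (x l)| * ((x l - s) ^ (γ - 1) - (x (l + 1) - s) ^ (γ - 1))) := by
        -- `|D|` is not known to be integrable; `integral_mono_of_nonneg` only needs the majorant.
        simp only [integral_of_le hk, integral_Ioc_eq_integral_Ioo]
        refine integral_mono_of_nonneg (Filter.Eventually.of_forall fun _ => abs_nonneg _)
          ((intervalIntegrable_iff_integrableOn_Ioo_of_le hk).1 hbound)
          ((ae_restrict_iff' measurableSet_Ioo).2 (Filter.Eventually.of_forall fun s hs =>
            abs_Dright_partition_le hγ0 hγ1 hx hkN hg gb hs))
    _ = _ := by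
        rw [intervalIntegral.integral_const_mul, integral_add ((hkernel _).const_mul _) hsum,
          intervalIntegral.integral_const_mul, integral_finsetSum fun l _ =>
            ((hkernel (x l)).sub (hkernel (x (l + 1)))).const_mul _]
        simp only [intervalIntegral.integral_const_mul, integral_sub (hkernel _) (hkernel _),
          integral_const_sub_rpow hγ0]
        simp only [← sub_div, mul_div_assoc', ← Finset.sum_div, ← add_div]
        ring

end StepFunction

section UniformGrid

variable {m : ℕ} {γ : ℝ}

/-- `uniformGrid m l = t_{l-1}`, so that cell `l` is `[t_{l-1}, t_l)` as in the statement. -/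
noncomputable def uniformGrid (m l : ℕ) : ℝ := ((l : ℝ) - 1) / m

lemma uniformGrid_monotone : Monotone (uniformGrid m) := fun i j hij => by
  unfold uniformGrid
  gcongr

lemma uniformGrid_succ (l : ℕ) : uniformGrid m (l + 1) = l / m := by
  simp [uniformGrid]

lemma rpow_uniformGrid_sub {i j : ℕ} (hji : j ≤ i) :
    (uniformGrid m i - uniformGrid m j) ^ γ = (m : ℝ) ^ (-γ) * ((i : ℝ) - j) ^ γ := by
  have hji' : (j : ℝ) ≤ i := by exact_mod_cast hji
  rw [uniformGrid, uniformGrid, ← sub_div, sub_sub_sub_cancel_right,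
    Real.div_rpow (by linarith) m.cast_nonneg, Real.rpow_neg m.cast_nonneg, div_eq_inv_mul]

lemma uniformGrid_boundary_term {k N : ℕ} (hkN : k ≤ N) :
    (uniformGrid m (N + 1) - uniformGrid m k) ^ γ
        - (uniformGrid m (N + 1) - uniformGrid m (k + 1)) ^ γ
      = (m : ℝ) ^ (-γ) * (((N : ℝ) - k + 1) ^ γ - ((N : ℝ) - k) ^ γ) := by
  rw [rpow_uniformGrid_sub (by omega), rpow_uniformGrid_sub (by omega)]
  push_cast
  ring_nf

lemma uniformGrid_cell_term_le {k l : ℕ} (hkl : k + 1 ≤ l) :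
    (uniformGrid m l - uniformGrid m k) ^ γ - (uniformGrid m l - uniformGrid m (k + 1)) ^ γ
      - ((uniformGrid m (l + 1) - uniformGrid m k) ^ γ
        - (uniformGrid m (l + 1) - uniformGrid m (k + 1)) ^ γ)
      ≤ (m : ℝ) ^ (-γ) *
          |((l : ℝ) - 1 - k) ^ γ - 2 * ((l : ℝ) - k) ^ γ + ((l : ℝ) - k + 1) ^ γ| := by
  rw [rpow_uniformGrid_sub (by omega), rpow_uniformGrid_sub (by omega),
    rpow_uniformGrid_sub (by omega), rpow_uniformGrid_sub (by omega)]
  push_cast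
  rw [show ((l : ℝ) - (k + 1)) = l - 1 - k by ring, show ((l : ℝ) + 1 - k) = l - k + 1 by ring,
    show ((l : ℝ) + 1 - (k + 1)) = l - k by ring]
  have hmγ : 0 ≤ (m : ℝ) ^ (-γ) := Real.rpow_nonneg m.cast_nonneg _
  have key := mul_le_mul_of_nonneg_left (neg_le_abs
    (((l : ℝ) - 1 - k) ^ γ - 2 * ((l : ℝ) - k) ^ γ + ((l : ℝ) - k + 1) ^ γ)) hmγ
  linarith

end UniformGrid

/-- There is `C = C(γ) > 0` such that for every step function `g` constant on each
`[t_{l-1}, t_l)` (`t_l = l/m`, `b = t_N`) and every `1 ≤ k ≤ N-1`: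
`∫_{t_{k-1}}^{t_k} |D_{b-}^{1-γ} g_{b-}(s)| ds ≤ C m^{-γ}
  [ ∑_{l=k+1}^N |g(t_{k-1}) - g(t_{l-1})| |(l-1-k)^γ - 2(l-k)^γ + (l-k+1)^γ|
    + |g(t_{k-1}) - g(t_{N-1})| ((N-k+1)^γ - (N-k)^γ) ]`. -/
theorem stmt_8 (γ : ℝ) (hγ0 : 0 < γ) (hγ1 : γ < 1) :
    ∃ C > (0 : ℝ), ∀ (m N : ℕ), 1 ≤ m → 2 ≤ N → ∀ g : ℝ → ℝ,
      (∀ l : ℕ, 1 ≤ l → l ≤ N →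
        ∀ x ∈ Set.Ico (((l : ℝ) - 1) / m) ((l : ℝ) / m), g x = g (((l : ℝ) - 1) / m)) →
      ∀ k : ℕ, 1 ≤ k → k ≤ N - 1 →
      (∫ x in (((k : ℝ) - 1) / m)..((k : ℝ) / m),
          |Dright γ ((N : ℝ) / m) (g (((N : ℝ) - 1) / m)) g x|)
        ≤ C * (m : ℝ) ^ (-γ) *
          ((∑ l ∈ Finset.Icc (k + 1) N,
              |g (((k : ℝ) - 1) / m) - g (((l : ℝ) - 1) / m)| *
                |((l : ℝ) - 1 - k) ^ γ - 2 * ((l : ℝ) - k) ^ γ + ((l : ℝ) - k + 1) ^ γ|)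
            + |g (((k : ℝ) - 1) / m) - g (((N : ℝ) - 1) / m)| *
                (((N : ℝ) - k + 1) ^ γ - ((N : ℝ) - k) ^ γ)) := by
  have hΓγ : 0 < Real.Gamma γ * γ := mul_pos (Real.Gamma_pos_of_pos hγ0) hγ0
  refine ⟨1 / (Real.Gamma γ * γ), by positivity, fun m N _ _ g hg k hk1 hkN => ?_⟩
  have hgx : IsStepOnCells g (uniformGrid m) k N := fun l hl y hy =>
    hg l (by grind) (Finset.mem_Icc.1 hl).2 y (uniformGrid_succ l ▸ hy)
  rw [← uniformGrid_succ k, ← uniformGrid_succ N]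
  refine (integral_abs_Dright_partition_le hγ0 hγ1 uniformGrid_monotone (by omega) hgx
    (g (uniformGrid m N))).trans ?_
  rw [uniformGrid_boundary_term (by omega)]
  calc _ ≤ 1 / (Real.Gamma γ * γ) *
        (|g (uniformGrid m k) - g (uniformGrid m N)| *
            ((m : ℝ) ^ (-γ) * (((N : ℝ) - k + 1) ^ γ - ((N : ℝ) - k) ^ γ))
          + ∑ l ∈ Finset.Icc (k + 1) N, |g (uniformGrid m k) - g (uniformGrid m l)| *
            ((m : ℝ) ^ (-γ) * |((l : ℝ) - 1 - k) ^ γ - 2 * ((l : ℝ) - k) ^ γ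
              + ((l : ℝ) - k + 1) ^ γ|)) := by
        gcongr with l hl
        exact uniformGrid_cell_term_le (Finset.mem_Icc.1 hl).1
    _ = _ := by
        simp_rw [uniformGrid, mul_left_comm _ ((m : ℝ) ^ (-γ)), ← Finset.mul_sum]
        ring
end

section
/- Let T > 0 and α ∈ (1/2, 1], and fix γ with 1/2 < γ < α. Let (Ω, F, P) be a probability space and, for each integer m ≥ 1, let ξ_{1,m}, …, ξ_{⌊mT⌋,m} be integrable random variables satisfying condition (H2): there is a constant C₀ > 0 (independent of m) with E[|Σ_{i=j+1}^{k} ξ_{i,m}|^4] ≤ C₀ ((k−j)/m)² for all 0 ≤ j < k ≤ ⌊mT⌋. Let f : Ω × [0,T] → ℝ be such that f(·, t) is measurable for each t and f(ω, ·) is continuous for each ω, and let ‖f(ω,·)‖_α = sup_{u≠v} |f(ω,u) − f(ω,v)|/|u−v|^α denote the (possibly infinite) α-Hölder seminorm of the path. Define R_{n,m}(t) = Σ_{j=1}^{⌊nt⌋} Σ_{i ∈ I_n(j)} (f(·, t_i) − f(·, u_{j−1})) ξ_{i,m}. Then there exists a constant C > 0, depending only on α, γ, T and C₀, such that for all K >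 0 and all positive integers n ≤ m: E[ sup_{t ∈ [0,T]} |R_{n,m}(t)| · 1_{{‖f(·,·)‖_α ≤ K}} ] ≤ C K n^{1/2 − α}. -/
open MeasureTheory Finset

/-!
On a block `I_n(j) = (p, p + L]` write the summand as
`(f(t_i) - f(t_{p+1})) ξ_i + (f(t_{p+1}) - f(u_{j-1})) ξ_i`. By (H2) and Lyapunov's inequality,
`E|∑_{p < i ≤ q} ξ_i| ≤ C₀^{1/4} ((q - p)/m)^{1/2}`; with the Hölder bound `K n^{-α}` this
controls the second part. The first part is handled by chaining: halving `(p, p + L]`, the two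
recentred halves recur, and recentring the right half costs `K (L/m)^α · C (L/m)^{1/2}`. Since
`β = α + 1/2 > 1`, the halves satisfy `l₁^β + l₂^β ≤ (2/3)^{β-1} L^β`, so the recursion closes
with a constant `D = (1 - (2/3)^{β-1})⁻¹` and gives `D K C (L/m)^β`. Blocks have length at most
`2m/n` and there are at most `nT` of them, so the total is `≲ nT · K n^{-β} = T K n^{1/2-α}`.
-/

theorem rpow_add_rpow_le_mul_rpow {β θ x y : ℝ} (hβ : 1 ≤ β) (hθ : 0 ≤ θ) (hy : 0 ≤ y)
    (hyx : y ≤ x) (hx : x ≤ θ * (x + y)) : x ^ β + y ^ β ≤ θ ^ (β - 1) * (x + y) ^ β := by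
  have hx0 : 0 ≤ x := hy.trans hyx
  have hpow {z : ℝ} (hz : 0 ≤ z) : z ^ β = z * z ^ (β - 1) := by
    rw [← Real.rpow_one_add' hz (by linarith), add_sub_cancel]
  have hmono : x ^ (β - 1) ≤ (θ * (x + y)) ^ (β - 1) := Real.rpow_le_rpow hx0 hx (by linarith)
  calc x ^ β + y ^ β = x * x ^ (β - 1) + y * y ^ (β - 1) := by rw [hpow hx0, hpow hy]
    _ ≤ x * (θ * (x + y)) ^ (β - 1) + y * (θ * (x + y)) ^ (β - 1) :=
      add_le_add (mul_le_mul_of_nonneg_left hmono hx0) (mul_le_mul_of_nonneg_left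
        ((Real.rpow_le_rpow hy hyx (by linarith)).trans hmono) hy)
    _ = θ ^ (β - 1) * ((x + y) * (x + y) ^ (β - 1)) := by
      rw [Real.mul_rpow hθ (by linarith)]; ring
    _ = θ ^ (β - 1) * (x + y) ^ β := by rw [← hpow (by linarith)]

/-- The fixed point of `D ↦ θ D + 1`, where `θ = (2/3)^(β-1)` is the factor by which one halving
step of the chaining below contracts the bound. -/
noncomputable def chainingConst (β : ℝ) : ℝ := (1 - (2 / 3 : ℝ) ^ (β - 1))⁻¹

theorem two_thirds_rpow_lt_one {β : ℝ} (hβ : 1 < β) : (2 / 3 : ℝ) ^ (β - 1) < 1 :=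
  Real.rpow_lt_one (by norm_num) (by norm_num) (by linarith)

theorem chainingConst_pos {β : ℝ} (hβ : 1 < β) : 0 < chainingConst β :=
  inv_pos.2 (sub_pos.2 (two_thirds_rpow_lt_one hβ))

theorem two_thirds_rpow_mul_chainingConst_add_one {β : ℝ} (hβ : 1 < β) :
    (2 / 3 : ℝ) ^ (β - 1) * chainingConst β + 1 = chainingConst β := by
  have := (sub_pos.2 (two_thirds_rpow_lt_one hβ)).ne'
  unfold chainingConst
  field_simp
  ring

theorem integral_abs_le_rpow_of_lintegral_pow_le {Ω : Type*} [MeasurableSpace Ω]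
    {μ : Measure Ω} [IsProbabilityMeasure μ] {S : Ω → ℝ} (hS : Integrable S μ) {p : ℕ}
    (hp : 1 ≤ p) {V : ℝ} (hV : 0 ≤ V)
    (hmom : ∫⁻ ω, ENNReal.ofReal (|S ω| ^ p) ∂μ ≤ ENNReal.ofReal V) :
    ∫ ω, |S ω| ∂μ ≤ V ^ (1 / p : ℝ) := by
  have hp0 : (p : ENNReal) ≠ 0 := by exact_mod_cast (by omega : p ≠ 0)
  have hLp : eLpNorm S p μ ≤ ENNReal.ofReal (V ^ (1 / p : ℝ)) := by
    rw [eLpNorm_eq_lintegral_rpow_enorm_toReal hp0 (ENNReal.natCast_ne_top p),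
      ← ENNReal.ofReal_rpow_of_nonneg hV (by positivity)]
    simp only [ENNReal.toReal_natCast, Real.enorm_eq_ofReal_abs,
      ENNReal.ofReal_rpow_of_nonneg (abs_nonneg _) (Nat.cast_nonneg p), Real.rpow_natCast]
    gcongr
  have hL1 := (eLpNorm_le_eLpNorm_of_exponent_le (p := 1) (q := p) (by exact_mod_cast hp)
    hS.1).trans hLp
  rw [eLpNorm_one_eq_lintegral_enorm, ← ofReal_integral_norm_eq_lintegral_enorm hS] at hL1
  exact (ENNReal.ofReal_le_ofReal_iff (by positivity)).1 hL1

theorem measurableSet_setOf_forall_le {Ω X : Type*} [MeasurableSpace Ω] [TopologicalSpace X]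
    [TopologicalSpace.SeparableSpace X] {g h : Ω → X → ℝ}
    (hg : ∀ x, Measurable fun ω => g ω x) (hh : ∀ x, Measurable fun ω => h ω x)
    (hgc : ∀ ω, Continuous (g ω)) (hhc : ∀ ω, Continuous (h ω)) :
    MeasurableSet {ω | ∀ x, g ω x ≤ h ω x} := by
  obtain ⟨D, hDc, hD⟩ := TopologicalSpace.exists_countable_dense X
  have hset : {ω | ∀ x, g ω x ≤ h ω x} = ⋂ x ∈ D, {ω | g ω x ≤ h ω x} := by
    ext ω
    simp only [Set.mem_ofPred_eq, Set.mem_iInter]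
    refine ⟨fun hω x _ => hω x, fun hω x => ?_⟩
    have hcl : closure D ⊆ {x | g ω x ≤ h ω x} :=
      (isClosed_le (hgc ω) (hhc ω)).closure_subset_iff.2 hω
    exact hcl (hD.closure_eq ▸ Set.mem_univ x)
  rw [hset]
  exact .biInter hDc fun x _ => measurableSet_le (hg x) (hh x)

theorem measurableSet_setOf_holderOn {Ω : Type*} [MeasurableSpace Ω] {f : Ω → ℝ → ℝ}
    {T K α : ℝ} (hα : 0 ≤ α) (hf : ∀ t, Measurable fun ω => f ω t)
    (hfc : ∀ ω, ContinuousOn (f ω) (Set.Icc 0 T)) :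
    MeasurableSet {ω | ∀ u ∈ Set.Icc (0 : ℝ) T, ∀ v ∈ Set.Icc (0 : ℝ) T,
      |f ω u - f ω v| ≤ K * |u - v| ^ α} := by
  have hcont (ω) : Continuous ((Set.Icc 0 T).domRestrict (f ω)) := (hfc ω).domRestrict
  have hval : Continuous fun x : Set.Icc (0 : ℝ) T × Set.Icc (0 : ℝ) T => (x.1 : ℝ) - x.2 :=
    (continuous_subtype_val.comp continuous_fst).sub (continuous_subtype_val.comp continuous_snd)
  convert measurableSet_setOf_forall_le (X := Set.Icc (0 : ℝ) T × Set.Icc (0 : ℝ) T)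
    (g := fun ω x => |f ω x.1 - f ω x.2|) (h := fun _ x => K * |(x.1 : ℝ) - x.2| ^ α)
    (fun _ => ((hf _).sub (hf _)).abs) (fun _ => measurable_const)
    (fun ω => (((hcont ω).comp continuous_fst).sub ((hcont ω).comp continuous_snd)).abs)
    (fun _ => continuous_const.mul (hval.abs.rpow_const fun _ => Or.inr hα)) using 1
  ext ω
  simp [Prod.forall, Subtype.forall]

theorem sum_Ioc_sub_mul_eq_add_add {Ω : Type*} (ξ c : ℕ → Ω → ℝ) (ω : Ω) {p s r : ℕ}
    (hps : p ≤ s) (hsr : s ≤ r) :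
    ∑ i ∈ Ioc p r, (c i ω - c (p + 1) ω) * ξ i ω
      = ∑ i ∈ Ioc p s, (c i ω - c (p + 1) ω) * ξ i ω
        + ∑ i ∈ Ioc s r, (c i ω - c (s + 1) ω) * ξ i ω
        + (c (s + 1) ω - c (p + 1) ω) * ∑ i ∈ Ioc s r, ξ i ω := by
  rw [← sum_Ioc_consecutive _ hps hsr, mul_sum, add_assoc, ← sum_add_distrib]
  congr 1
  exact sum_congr rfl fun i _ => by ring

section Chaining

variable {Ω : Type*} [MeasurableSpace Ω] {μ : Measure Ω} {A : Set Ω}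

theorem integrableOn_sum_mul (hA : MeasurableSet A) {s : Finset ℕ} {b ξ : ℕ → Ω → ℝ}
    (hξ : ∀ i ∈ s, Integrable (ξ i) μ) (hb : ∀ i ∈ s, AEStronglyMeasurable (b i) μ)
    (hbdd : ∀ i ∈ s, ∃ k, ∀ ω ∈ A, |b i ω| ≤ k) :
    IntegrableOn (fun ω => ∑ i ∈ s, b i ω * ξ i ω) A μ := by
  refine integrable_finsetSum s fun i hi => ?_
  obtain ⟨k, hk⟩ := hbdd i hi
  exact (hξ i hi).integrableOn.bdd_mul (hb i hi).restrict (ae_restrict_of_forall_mem hA hk)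

theorem setIntegral_abs_add_add_mul_le (hA : MeasurableSet A) {X Y b S : Ω → ℝ} {k : ℝ}
    (hk : 0 ≤ k) (hX : IntegrableOn X A μ) (hY : IntegrableOn Y A μ) (hS : Integrable S μ)
    (hb : ∀ ω ∈ A, |b ω| ≤ k) :
    ∫ ω in A, |X ω + Y ω + b ω * S ω| ∂μ
      ≤ ∫ ω in A, |X ω| ∂μ + ∫ ω in A, |Y ω| ∂μ + k * ∫ ω, |S ω| ∂μ := by
  have hXY : IntegrableOn (fun ω => |X ω| + |Y ω|) A μ := hX.abs.add hY.abs
  have hkS : IntegrableOn (fun ω => k * |S ω|) A μ := hS.abs.integrableOn.const_mul k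
  have hpt : ∀ ω ∈ A, |X ω + Y ω + b ω * S ω| ≤ |X ω| + |Y ω| + k * |S ω| := fun ω hω =>
    calc _ ≤ |X ω| + |Y ω| + |b ω * S ω| := abs_add_three _ _ _
      _ ≤ _ := by rw [abs_mul]; gcongr; exact hb ω hω
  calc ∫ ω in A, |X ω + Y ω + b ω * S ω| ∂μ
      ≤ ∫ ω in A, (|X ω| + |Y ω| + k * |S ω|) ∂μ :=
        integral_mono_of_nonneg (ae_of_all _ fun _ => abs_nonneg _)
          (hXY.add hkS) (ae_restrict_of_forall_mem hA hpt)
    _ = ∫ ω in A, |X ω| ∂μ + ∫ ω in A, |Y ω| ∂μ + k * ∫ ω in A, |S ω| ∂μ := by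
        rw [integral_add hXY hkS, integral_add hX.abs hY.abs, integral_const_mul]
    _ ≤ _ := add_le_add_right (mul_le_mul_of_nonneg_left
        (setIntegral_le_integral hS.abs (ae_of_all _ fun _ => abs_nonneg _)) hk) _

variable {ξ c : ℕ → Ω → ℝ} {M : ℕ} {h K C α ρ : ℝ}

theorem rpow_add_rpow_halves_le (hh : 0 ≤ h) (hβ : 1 < α + ρ) {L : ℕ} (hL : 2 ≤ L) :
    (h * ((L + 1) / 2 : ℕ)) ^ (α + ρ) + (h * (L / 2 : ℕ)) ^ (α + ρ)
      ≤ (2 / 3) ^ (α + ρ - 1) * (h * L) ^ (α + ρ) := by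
  have hsum : (((L + 1) / 2 : ℕ) : ℝ) + (L / 2 : ℕ) = L := by norm_cast; omega
  have h₁ : 3 * (((L + 1) / 2 : ℕ) : ℝ) ≤ 2 * L := by norm_cast; omega
  have h₂ : ((L / 2 : ℕ) : ℝ) ≤ ((L + 1) / 2 : ℕ) := by norm_cast; omega
  have := rpow_add_rpow_le_mul_rpow (θ := 2 / 3) hβ.le (by norm_num)
    (mul_nonneg hh (Nat.cast_nonneg _)) (mul_le_mul_of_nonneg_left h₂ hh)
    (x := h * ((L + 1) / 2 : ℕ)) (by rw [← mul_add, hsum]; nlinarith)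
  rwa [← mul_add, hsum] at this

theorem chainingConst_mul_halves_add_le (hh : 0 ≤ h) (hK : 0 ≤ K) (hC : 0 ≤ C) (hα : 0 ≤ α)
    (hρ : 0 ≤ ρ) (hβ : 1 < α + ρ) {L : ℕ} (hL : 2 ≤ L) :
    chainingConst (α + ρ) * K * C * (h * ((L + 1) / 2 : ℕ)) ^ (α + ρ)
      + chainingConst (α + ρ) * K * C * (h * (L / 2 : ℕ)) ^ (α + ρ)
      + K * (h * ((L + 1) / 2 : ℕ)) ^ α * (C * (h * (L / 2 : ℕ)) ^ ρ)
      ≤ chainingConst (α + ρ) * K * C * (h * L) ^ (α + ρ) := by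
  have hD := chainingConst_pos hβ
  have hprod : (h * ((L + 1) / 2 : ℕ)) ^ α * (h * (L / 2 : ℕ)) ^ ρ ≤ (h * L) ^ (α + ρ) := by
    rw [Real.rpow_add' (by positivity) (by linarith)]
    have hl₁ : (((L + 1) / 2 : ℕ) : ℝ) ≤ L := by norm_cast; omega
    have hl₂ : ((L / 2 : ℕ) : ℝ) ≤ L := by norm_cast; omega
    gcongr
  calc _ = K * C * (chainingConst (α + ρ) * ((h * ((L + 1) / 2 : ℕ)) ^ (α + ρ)
          + (h * (L / 2 : ℕ)) ^ (α + ρ))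
          + (h * ((L + 1) / 2 : ℕ)) ^ α * (h * (L / 2 : ℕ)) ^ ρ) := by
        ring
    _ ≤ K * C * (chainingConst (α + ρ) * ((2 / 3) ^ (α + ρ - 1) * (h * L) ^ (α + ρ))
        + (h * L) ^ (α + ρ)) := by gcongr; exact rpow_add_rpow_halves_le hh hβ hL
    _ = ((2 / 3) ^ (α + ρ - 1) * chainingConst (α + ρ) + 1) * K * C * (h * L) ^ (α + ρ) := by
        ring
    _ = chainingConst (α + ρ) * K * C * (h * L) ^ (α + ρ) := by
        rw [two_thirds_rpow_mul_chainingConst_add_one hβ]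

theorem integrableOn_sum_sub_mul (hA : MeasurableSet A) (hξ : ∀ i, Integrable (ξ i) μ)
    (hc : ∀ i, AEStronglyMeasurable (c i) μ)
    (hhol : ∀ i ≤ M, ∀ j ≤ M, ∀ ω ∈ A, |c i ω - c j ω| ≤ K * (h * |(i : ℝ) - j|) ^ α)
    {q r : ℕ} (hr : r ≤ M) :
    IntegrableOn (fun ω => ∑ i ∈ Ioc q r, (c i ω - c (q + 1) ω) * ξ i ω) A μ :=
  integrableOn_sum_mul hA (fun i _ => hξ i) (fun i _ => (hc i).sub (hc (q + 1)))
    fun i hi => ⟨_, hhol i (by grind) (q + 1) (by grind)⟩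

theorem setIntegral_abs_sum_sub_mul_le (hA : MeasurableSet A) (hξ : ∀ i, Integrable (ξ i) μ)
    (hc : ∀ i, AEStronglyMeasurable (c i) μ) (hh : 0 ≤ h) (hK : 0 ≤ K) (hC : 0 ≤ C)
    (hα : 0 ≤ α) (hρ : 0 ≤ ρ) (hβ : 1 < α + ρ)
    (hincr : ∀ p q, p < q → q ≤ M →
      ∫ ω, |∑ i ∈ Ioc p q, ξ i ω| ∂μ ≤ C * (h * ((q : ℝ) - p)) ^ ρ)
    (hhol : ∀ i ≤ M, ∀ j ≤ M, ∀ ω ∈ A, |c i ω - c j ω| ≤ K * (h * |(i : ℝ) - j|) ^ α)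
    (L p : ℕ) (hL : p + L ≤ M) :
    ∫ ω in A, |∑ i ∈ Ioc p (p + L), (c i ω - c (p + 1) ω) * ξ i ω| ∂μ
      ≤ chainingConst (α + ρ) * K * C * (h * L) ^ (α + ρ) := by
  have hD := chainingConst_pos hβ
  induction L using Nat.strong_induction_on generalizing p with
  | _ L ih =>
  rcases lt_or_ge L 2 with hL2 | hL2
  · have hzero (ω) : ∑ i ∈ Ioc p (p + L), (c i ω - c (p + 1) ω) * ξ i ω = 0 := by
      interval_cases L <;> simp
    simp only [hzero, abs_zero, integral_zero]
    positivity
  set l₁ := (L + 1) / 2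
  set l₂ := L / 2
  have hl : p + L = p + l₁ + l₂ := by omega
  have hcross : ∀ ω ∈ A, |c (p + l₁ + 1) ω - c (p + 1) ω| ≤ K * (h * l₁) ^ α := by
    intro ω hω
    have hdist : |((p + l₁ + 1 : ℕ) : ℝ) - (p + 1 : ℕ)| = l₁ := by
      push_cast
      rw [add_sub_add_right_eq_sub, add_sub_cancel_left, abs_of_nonneg (Nat.cast_nonneg _)]
    simpa only [hdist] using hhol (p + l₁ + 1) (by omega) (p + 1) (by omega) ω hω
  have hleft := ih l₁ (by omega) p (by omega)
  have hright := ih l₂ (by omega) (p + l₁) (by omega)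
  have hS := hincr (p + l₁) (p + l₁ + l₂) (by omega) (by omega)
  push_cast at hS
  rw [add_sub_cancel_left] at hS
  calc ∫ ω in A, |∑ i ∈ Ioc p (p + L), (c i ω - c (p + 1) ω) * ξ i ω| ∂μ
      ≤ ∫ ω in A, |∑ i ∈ Ioc p (p + l₁), (c i ω - c (p + 1) ω) * ξ i ω| ∂μ
        + ∫ ω in A, |∑ i ∈ Ioc (p + l₁) (p + l₁ + l₂), (c i ω - c (p + l₁ + 1) ω) * ξ i ω| ∂μ
        + K * (h * l₁) ^ α * ∫ ω, |∑ i ∈ Ioc (p + l₁) (p + l₁ + l₂), ξ i ω| ∂μ := by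
        simp_rw [hl, sum_Ioc_sub_mul_eq_add_add ξ c _ (Nat.le_add_right p l₁)
          (Nat.le_add_right _ l₂)]
        exact setIntegral_abs_add_add_mul_le hA (by positivity)
          (integrableOn_sum_sub_mul hA hξ hc hhol (by omega))
          (integrableOn_sum_sub_mul hA hξ hc hhol (by omega))
          (integrable_finsetSum _ fun i _ => hξ i) hcross
    _ ≤ chainingConst (α + ρ) * K * C * (h * l₁) ^ (α + ρ)
        + chainingConst (α + ρ) * K * C * (h * l₂) ^ (α + ρ)
        + K * (h * l₁) ^ α * (C * (h * l₂) ^ ρ) := by gcongr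
    _ ≤ chainingConst (α + ρ) * K * C * (h * L) ^ (α + ρ) :=
        chainingConst_mul_halves_add_le hh hK hC hα hρ hβ hL2

theorem setIntegral_abs_sum_mul_le (hA : MeasurableSet A) (hξ : ∀ i, Integrable (ξ i) μ)
    (hc : ∀ i, AEStronglyMeasurable (c i) μ) (hh : 0 ≤ h) (hK : 0 ≤ K) (hC : 0 ≤ C)
    (hα : 0 ≤ α) (hρ : 0 ≤ ρ) (hβ : 1 < α + ρ)
    (hincr : ∀ p q, p < q → q ≤ M →
      ∫ ω, |∑ i ∈ Ioc p q, ξ i ω| ∂μ ≤ C * (h * ((q : ℝ) - p)) ^ ρ)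
    (hhol : ∀ i ≤ M, ∀ j ≤ M, ∀ ω ∈ A, |c i ω - c j ω| ≤ K * (h * |(i : ℝ) - j|) ^ α)
    {k : ℝ} (hk : 0 ≤ k) {p L : ℕ} (hL₀ : 0 < L) (hL : p + L ≤ M)
    (hanchor : ∀ ω ∈ A, |c (p + 1) ω| ≤ k) :
    ∫ ω in A, |∑ i ∈ Ioc p (p + L), c i ω * ξ i ω| ∂μ
      ≤ chainingConst (α + ρ) * K * C * (h * L) ^ (α + ρ) + k * (C * (h * L) ^ ρ) := by
  have hsplit (ω) : ∑ i ∈ Ioc p (p + L), c i ω * ξ i ω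
      = ∑ i ∈ Ioc p (p + L), (c i ω - c (p + 1) ω) * ξ i ω + 0
        + c (p + 1) ω * ∑ i ∈ Ioc p (p + L), ξ i ω := by
    rw [mul_sum, add_zero, ← sum_add_distrib]
    exact sum_congr rfl fun _ _ => by ring
  have hS := hincr p (p + L) (by omega) hL
  push_cast at hS
  rw [add_sub_cancel_left] at hS
  simp_rw [hsplit]
  refine (setIntegral_abs_add_add_mul_le hA hk (integrableOn_sum_sub_mul hA hξ hc hhol hL)
    integrableOn_zero (integrable_finsetSum _ fun i _ => hξ i) hanchor).trans ?_
  simp only [abs_zero, integral_zero, add_zero]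
  gcongr
  exact setIntegral_abs_sum_sub_mul_le hA hξ hc hh hK hC hα hρ hβ hincr hhol L p hL

end Chaining

theorem integral_abs_sum_Ioc_le_of_lintegral_pow_four_le {Ω : Type*} [MeasurableSpace Ω]
    {μ : Measure Ω} [IsProbabilityMeasure μ] {ξ : ℕ → Ω → ℝ} (hξ : ∀ i, Integrable (ξ i) μ)
    {C₀ : ℝ} (hC₀ : 0 ≤ C₀) {m p q : ℕ} (hpq : p ≤ q)
    (hmom : ∫⁻ ω, ENNReal.ofReal (|∑ i ∈ Icc (p + 1) q, ξ i ω| ^ 4) ∂μ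
      ≤ ENNReal.ofReal (C₀ * (((q : ℝ) - p) / m) ^ 2)) :
    ∫ ω, |∑ i ∈ Ioc p q, ξ i ω| ∂μ
      ≤ C₀ ^ (1 / 4 : ℝ) * ((m : ℝ)⁻¹ * ((q : ℝ) - p)) ^ (1 / 2 : ℝ) := by
  have hd : 0 ≤ ((q : ℝ) - p) / m := div_nonneg (sub_nonneg.2 (by exact_mod_cast hpq)) m.cast_nonneg
  rw [← Icc_add_one_left_eq_Ioc]
  refine (integral_abs_le_rpow_of_lintegral_pow_le (integrable_finsetSum _ fun i _ => hξ i)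
    (by norm_num) (by positivity) hmom).trans_eq ?_
  rw [Real.mul_rpow hC₀ (by positivity), ← Real.rpow_natCast, ← Real.rpow_mul hd, inv_mul_eq_div]
  norm_num

theorem iSup_abs_sum_Icc_le {ι : Sort*} (b : ℕ → ℝ) {g : ι → ℕ} {N : ℕ} (hg : ∀ t, g t ≤ N) :
    ⨆ t, |∑ j ∈ Icc 1 (g t), b j| ≤ ∑ j ∈ Icc 1 N, |b j| :=
  Real.iSup_le (fun t => (abs_sum_le_sum_abs _ _).trans <|
      sum_le_sum_of_subset_of_nonneg (Icc_subset_Icc_right (hg t)) fun _ _ _ => abs_nonneg _)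
    (sum_nonneg fun _ _ => abs_nonneg _)

theorem integral_mul_indicator_one {Ω : Type*} [MeasurableSpace Ω] {μ : Measure Ω} {A : Set Ω}
    (hA : MeasurableSet A) (F : Ω → ℝ) :
    ∫ ω, F ω * A.indicator (fun _ => (1 : ℝ)) ω ∂μ = ∫ ω in A, F ω ∂μ := by
  simp_rw [← Set.indicator_mul_right, mul_one]
  exact integral_indicator hA

theorem setIntegral_iSup_abs_sum_Icc_le {Ω : Type*} [MeasurableSpace Ω] {μ : Measure Ω}
    {A : Set Ω} {ι : Sort*} (b : ℕ → Ω → ℝ) {g : ι → ℕ} {N : ℕ} (hg : ∀ t, g t ≤ N)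
    (hb : ∀ j ∈ Icc 1 N, IntegrableOn (fun ω => |b j ω|) A μ) :
    ∫ ω in A, ⨆ t, |∑ j ∈ Icc 1 (g t), b j ω| ∂μ ≤ ∑ j ∈ Icc 1 N, ∫ ω in A, |b j ω| ∂μ := by
  rw [← integral_finsetSum _ hb]
  exact integral_mono_of_nonneg (ae_of_all _ fun _ => Real.iSup_nonneg fun _ => abs_nonneg _)
    (integrable_finsetSum _ hb) (ae_of_all _ fun ω => iSup_abs_sum_Icc_le (b · ω) hg)

/-- The block `I_n(j)`. -/
noncomputable def blockIndices (m n : ℕ) (T : ℝ) (j : ℕ) : Finset ℕ :=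
  (Icc 1 ⌊(m : ℝ) * T⌋₊).filter
    (fun i : ℕ => ((j : ℝ) - 1) / n ≤ (i : ℝ) / m ∧ (i : ℝ) / m < (j : ℝ) / n)

section Blocks

variable {m n : ℕ} {T : ℝ} {i j : ℕ}

theorem mem_blockIndices : i ∈ blockIndices m n T j ↔ (1 ≤ i ∧ i ≤ ⌊(m : ℝ) * T⌋₊) ∧
    ((j : ℝ) - 1) / n ≤ (i : ℝ) / m ∧ (i : ℝ) / m < (j : ℝ) / n := by
  rw [blockIndices, mem_filter, mem_Icc]

theorem blockIndices_eq_Ioc (hne : (blockIndices m n T j).Nonempty) :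
    ∃ p L, 0 < L ∧ blockIndices m n T j = Ioc p (p + L) := by
  set s := blockIndices m n T j
  have hmin := mem_blockIndices.1 (s.min'_mem hne)
  have hmax := mem_blockIndices.1 (s.max'_mem hne)
  have hle := s.min'_le _ (s.max'_mem hne)
  refine ⟨s.min' hne - 1, s.max' hne - s.min' hne + 1, by omega, ?_⟩
  ext i
  rw [mem_Ioc]
  constructor
  · intro hi
    have := s.min'_le i hi
    have := s.le_max' i hi
    omega
  · intro hi
    have h₁ : s.min' hne ≤ i := by omega
    have h₂ : i ≤ s.max' hne := by omega
    refine mem_blockIndices.2 ⟨⟨by omega, by omega⟩, hmin.2.1.trans ?_, lt_of_le_of_lt ?_ hmax.2.2⟩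
    all_goals gcongr

theorem natCast_div_mem_Icc_of_le_floor (hT : 0 ≤ T) (hi : i ≤ ⌊(m : ℝ) * T⌋₊) :
    (i : ℝ) / m ∈ Set.Icc 0 T := by
  refine ⟨by positivity, div_le_of_le_mul₀ m.cast_nonneg hT ?_⟩
  rw [mul_comm]
  exact (Nat.cast_le.2 hi).trans (Nat.floor_le (by positivity))

theorem abs_sub_le_of_mem_blockIndices {g : ℝ → ℝ} {K α : ℝ} (hK : 0 ≤ K) (hα : 0 ≤ α)
    (hT : 0 ≤ T) (hj : 1 ≤ j)
    (hg : ∀ u ∈ Set.Icc 0 T, ∀ v ∈ Set.Icc 0 T, |g u - g v| ≤ K * |u - v| ^ α)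
    (hi : i ∈ blockIndices m n T j) :
    |g ((i : ℝ) / m) - g (((j : ℝ) - 1) / n)| ≤ K * (1 / n) ^ α := by
  obtain ⟨⟨-, hiM⟩, hlo, hhi⟩ := mem_blockIndices.1 hi
  have ht := natCast_div_mem_Icc_of_le_floor hT hiM
  have hj' : (1 : ℝ) ≤ j := by exact_mod_cast hj
  have hu : ((j : ℝ) - 1) / n ∈ Set.Icc 0 T := ⟨by positivity, hlo.trans ht.2⟩
  have hdist : |(i : ℝ) / m - ((j : ℝ) - 1) / n| ≤ 1 / n := by
    rw [abs_of_nonneg (sub_nonneg.2 hlo)]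
    have : (j : ℝ) / n = ((j : ℝ) - 1) / n + 1 / n := by ring
    linarith
  calc _ ≤ K * |(i : ℝ) / m - ((j : ℝ) - 1) / n| ^ α := hg _ ht _ hu
    _ ≤ K * (1 / n) ^ α := by gcongr

theorem length_div_le_of_blockIndices_eq_Ioc (hn : 0 < n) (hnm : n ≤ m) {p L : ℕ} (hL : 0 < L)
    (hblock : blockIndices m n T j = Ioc p (p + L)) : (m : ℝ)⁻¹ * L ≤ 2 / n := by
  have h₁ := (mem_blockIndices.1 (hblock ▸ mem_Ioc.2 ⟨p.lt_succ_self, by omega⟩)).2.1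
  have h₂ := (mem_blockIndices.1 (hblock ▸ mem_Ioc.2 ⟨by omega, le_rfl⟩)).2.2
  have hm : (0 : ℝ) < m := by exact_mod_cast hn.trans_le hnm
  have hmn : 1 / (m : ℝ) ≤ 1 / n := one_div_le_one_div_of_le (by exact_mod_cast hn)
    (by exact_mod_cast hnm)
  push_cast at h₁ h₂
  have : (m : ℝ)⁻¹ * L = (p + L) / m - (p + 1) / m + 1 / m := by field_simp; ring
  have : (j : ℝ) / n = ((j : ℝ) - 1) / n + 1 / n := by ring
  have : (2 : ℝ) / n = 1 / n + 1 / n := by ring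
  linarith

variable {Ω : Type*} [MeasurableSpace Ω] {μ : Measure Ω} {A : Set Ω} {ξ : ℕ → Ω → ℝ}
  {f : Ω → ℝ → ℝ} {K α : ℝ}

theorem integrableOn_abs_blockSum (hA : MeasurableSet A) (hξ : ∀ i, Integrable (ξ i) μ)
    (hf : ∀ t, Measurable fun ω => f ω t) (hK : 0 ≤ K) (hα : 0 ≤ α) (hT : 0 ≤ T) (hj : 1 ≤ j)
    (hhol : ∀ ω ∈ A, ∀ u ∈ Set.Icc 0 T, ∀ v ∈ Set.Icc 0 T, |f ω u - f ω v| ≤ K * |u - v| ^ α) :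
    IntegrableOn (fun ω => |∑ i ∈ blockIndices m n T j,
      (f ω ((i : ℝ) / m) - f ω (((j : ℝ) - 1) / n)) * ξ i ω|) A μ :=
  (integrableOn_sum_mul hA (fun i _ => hξ i)
    (fun _ _ => ((hf _).sub (hf _)).aestronglyMeasurable)
    fun _ hi => ⟨_, fun ω hω => abs_sub_le_of_mem_blockIndices hK hα hT hj (hhol ω hω) hi⟩).abs

theorem setIntegral_abs_blockSum_le (hA : MeasurableSet A) (hξ : ∀ i, Integrable (ξ i) μ)
    (hf : ∀ t, Measurable fun ω => f ω t) {C ρ : ℝ} (hK : 0 ≤ K) (hC : 0 ≤ C) (hα : 0 ≤ α)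
    (hρ : 0 ≤ ρ) (hβ : 1 < α + ρ) (hT : 0 ≤ T) (hn : 0 < n) (hnm : n ≤ m) (hj : 1 ≤ j)
    (hincr : ∀ p q, p < q → q ≤ ⌊(m : ℝ) * T⌋₊ →
      ∫ ω, |∑ i ∈ Ioc p q, ξ i ω| ∂μ ≤ C * ((m : ℝ)⁻¹ * ((q : ℝ) - p)) ^ ρ)
    (hhol : ∀ ω ∈ A, ∀ u ∈ Set.Icc 0 T, ∀ v ∈ Set.Icc 0 T, |f ω u - f ω v| ≤ K * |u - v| ^ α) :
    ∫ ω in A, |∑ i ∈ blockIndices m n T j,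
        (f ω ((i : ℝ) / m) - f ω (((j : ℝ) - 1) / n)) * ξ i ω| ∂μ
      ≤ (chainingConst (α + ρ) + 1) * K * C * (2 / n) ^ (α + ρ) := by
  have hD := chainingConst_pos hβ
  rcases (blockIndices m n T j).eq_empty_or_nonempty with hemp | hne
  · simp only [hemp, sum_empty, abs_zero, integral_zero]
    positivity
  obtain ⟨p, L, hL, hblock⟩ := blockIndices_eq_Ioc hne
  have hM : p + L ≤ ⌊(m : ℝ) * T⌋₊ :=
    (mem_blockIndices.1 (hblock ▸ mem_Ioc.2 ⟨by omega, le_rfl⟩)).1.2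
  have hlen := length_div_le_of_blockIndices_eq_Ioc hn hnm hL hblock
  have hgrid : ∀ i ≤ ⌊(m : ℝ) * T⌋₊, ∀ i' ≤ ⌊(m : ℝ) * T⌋₊, ∀ ω ∈ A,
      |(f ω ((i : ℝ) / m) - f ω (((j : ℝ) - 1) / n))
        - (f ω ((i' : ℝ) / m) - f ω (((j : ℝ) - 1) / n))|
        ≤ K * ((m : ℝ)⁻¹ * |(i : ℝ) - i'|) ^ α := by
    intro i hi i' hi' ω hω
    have hdist : (m : ℝ)⁻¹ * |(i : ℝ) - i'| = |(i : ℝ) / m - i' / m| := by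
      rw [← sub_div, abs_div, Nat.abs_cast, div_eq_inv_mul]
    rw [sub_sub_sub_cancel_right, hdist]
    exact hhol ω hω _ (natCast_div_mem_Icc_of_le_floor hT hi) _
      (natCast_div_mem_Icc_of_le_floor hT hi')
  have hanchor (ω) (hω : ω ∈ A) :=
    abs_sub_le_of_mem_blockIndices hK hα hT hj (hhol ω hω)
      (hblock ▸ mem_Ioc.2 ⟨p.lt_succ_self, by omega⟩ : p + 1 ∈ blockIndices m n T j)
  have hn' : (1 : ℝ) / n ≤ 2 / n := by gcongr; norm_num
  rw [hblock]
  calc _ ≤ chainingConst (α + ρ) * K * C * ((m : ℝ)⁻¹ * L) ^ (α + ρ)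
        + K * (1 / n) ^ α * (C * ((m : ℝ)⁻¹ * L) ^ ρ) :=
      setIntegral_abs_sum_mul_le hA hξ (fun i => ((hf _).sub (hf _)).aestronglyMeasurable)
        (by positivity) hK hC hα hρ hβ hincr hgrid (by positivity) hL hM hanchor
    _ ≤ chainingConst (α + ρ) * K * C * (2 / n) ^ (α + ρ)
        + K * (2 / n) ^ α * (C * (2 / n) ^ ρ) := by gcongr
    _ = (chainingConst (α + ρ) + 1) * K * C * (2 / n) ^ (α + ρ) := by
      rw [Real.rpow_add (by positivity)]
      ring

end Blocks

theorem stmt_12_general (T α C₀ : ℝ) (hT : 0 < T) (hα : 1 / 2 < α) (hC₀ : 0 < C₀) :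
    ∃ C > (0 : ℝ), ∀ (Ω : Type) (m0 : MeasurableSpace Ω) (μ : Measure Ω),
      IsProbabilityMeasure μ →
      ∀ ξ : ℕ → ℕ → Ω → ℝ,
      (∀ m i : ℕ, 1 ≤ m → Integrable (ξ m i) μ) →
      (∀ m : ℕ, 1 ≤ m → ∀ j k : ℕ, j < k → k ≤ ⌊(m : ℝ) * T⌋₊ →
        (∫⁻ ω, ENNReal.ofReal (|∑ i ∈ Finset.Icc (j + 1) k, ξ m i ω| ^ 4) ∂μ)
          ≤ ENNReal.ofReal (C₀ * (((k : ℝ) - (j : ℝ)) / m) ^ 2)) →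
      ∀ f : Ω → ℝ → ℝ,
      (∀ t : ℝ, Measurable fun ω => f ω t) →
      (∀ ω, ContinuousOn (f ω) (Set.Icc (0 : ℝ) T)) →
      ∀ K : ℝ, 0 < K → ∀ m n : ℕ, 1 ≤ n → n ≤ m →
      (∫ ω, (⨆ t : Set.Icc (0 : ℝ) T,
            |∑ j ∈ Finset.Icc 1 ⌊(n : ℝ) * (t : ℝ)⌋₊,
              ∑ i ∈ (Finset.Icc 1 ⌊(m : ℝ) * T⌋₊).filter
                  (fun i : ℕ => ((j : ℝ) - 1) / n ≤ (i : ℝ) / m ∧ (i : ℝ) / m < (j : ℝ) / n),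
                (f ω ((i : ℝ) / m) - f ω (((j : ℝ) - 1) / n)) * ξ m i ω|) *
          Set.indicator {ω' : Ω | ∀ u ∈ Set.Icc (0 : ℝ) T, ∀ v ∈ Set.Icc (0 : ℝ) T,
              |f ω' u - f ω' v| ≤ K * |u - v| ^ α} (fun _ => (1 : ℝ)) ω ∂μ)
        ≤ C * K * (n : ℝ) ^ (1 / 2 - α) := by
  have hβ : 1 < α + 1 / 2 := by linarith
  have hD := chainingConst_pos hβ
  refine ⟨(chainingConst (α + 1 / 2) + 1) * C₀ ^ (1 / 4 : ℝ) * 2 ^ (α + 1 / 2) * T,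
    by positivity, fun Ω _ μ _ ξ hξ hmom f hf hfc K hK m n hn hnm => ?_⟩
  have hA := measurableSet_setOf_holderOn (K := K) (α := α) (by linarith) hf hfc
  have hξm (i) : Integrable (ξ m i) μ := hξ m i (hn.trans hnm)
  have hincr (p q : ℕ) (hpq : p < q) (hq : q ≤ ⌊(m : ℝ) * T⌋₊) :=
    integral_abs_sum_Ioc_le_of_lintegral_pow_four_le hξm hC₀.le hpq.le
      (hmom m (hn.trans hnm) p q hpq hq)
  have hint (j) (hj : j ∈ Icc 1 ⌊(n : ℝ) * T⌋₊) :=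
    integrableOn_abs_blockSum (m := m) (n := n) hA hξm hf hK.le (by linarith) hT.le
      (mem_Icc.1 hj).1 fun ω hω => hω
  have hblock (j) (hj : j ∈ Icc 1 ⌊(n : ℝ) * T⌋₊) :=
    setIntegral_abs_blockSum_le (m := m) (n := n) hA hξm hf hK.le (by positivity) (by linarith)
      (by norm_num) hβ hT.le hn hnm (mem_Icc.1 hj).1 hincr fun ω hω => hω
  have hN : (⌊(n : ℝ) * T⌋₊ : ℝ) ≤ n * T := Nat.floor_le (by positivity)
  rw [integral_mul_indicator_one hA]
  calc _ ≤ ∑ j ∈ Icc 1 ⌊(n : ℝ) * T⌋₊, ∫ ω in _, |∑ i ∈ blockIndices m n T j,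
          (f ω ((i : ℝ) / m) - f ω (((j : ℝ) - 1) / n)) * ξ m i ω| ∂μ :=
        setIntegral_iSup_abs_sum_Icc_le _ (fun t => Nat.floor_le_floor
          (mul_le_mul_of_nonneg_left t.2.2 n.cast_nonneg)) hint
    _ ≤ ⌊(n : ℝ) * T⌋₊ * ((chainingConst (α + 1 / 2) + 1) * K * C₀ ^ (1 / 4 : ℝ)
          * (2 / n) ^ (α + 1 / 2)) := by
        simpa using sum_le_sum hblock
    _ ≤ n * T * ((chainingConst (α + 1 / 2) + 1) * K * C₀ ^ (1 / 4 : ℝ)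
          * (2 / n) ^ (α + 1 / 2)) := by gcongr
    _ = _ := by
        rw [Real.div_rpow (by norm_num) n.cast_nonneg, show 1 / 2 - α = 1 - (α + 1 / 2) by ring,
          Real.rpow_sub (by exact_mod_cast hn), Real.rpow_one]
        ring

/-- Main expectation bound: for `T > 0`, `1/2 < α ≤ 1`, `1/2 < γ < α` and `C₀ > 0` there is
`C = C(α,γ,T,C₀) > 0` such that for random weights `ξ_{i,m}` satisfying (H2) with constant
`C₀` and any continuous-in-time, measurable-in-ω process `f`,
`E[ sup_{t ∈ [0,T]} |R_{n,m}(t)| · 1_{‖f(ω,·)‖_α ≤ K} ] ≤ C K n^{1/2-α}` for all `K > 0`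
and all `1 ≤ n ≤ m`, where
`R_{n,m}(t) = ∑_{j=1}^{⌊nt⌋} ∑_{i ∈ I_n(j)} (f(·,t_i) - f(·,u_{j-1})) ξ_{i,m}`. -/
theorem stmt_12 (T α γ C₀ : ℝ) (hT : 0 < T) (hα : 1 / 2 < α) (hα1 : α ≤ 1)
    (hγ : 1 / 2 < γ) (hγα : γ < α) (hC₀ : 0 < C₀) :
    ∃ C > (0 : ℝ), ∀ (Ω : Type) (m0 : MeasurableSpace Ω) (μ : Measure Ω),
      IsProbabilityMeasure μ →
      ∀ ξ : ℕ → ℕ → Ω → ℝ,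
      (∀ m i : ℕ, 1 ≤ m → Integrable (ξ m i) μ) →
      (∀ m : ℕ, 1 ≤ m → ∀ j k : ℕ, j < k → k ≤ ⌊(m : ℝ) * T⌋₊ →
        (∫⁻ ω, ENNReal.ofReal (|∑ i ∈ Finset.Icc (j + 1) k, ξ m i ω| ^ 4) ∂μ)
          ≤ ENNReal.ofReal (C₀ * (((k : ℝ) - (j : ℝ)) / m) ^ 2)) →
      ∀ f : Ω → ℝ → ℝ,
      (∀ t : ℝ, Measurable fun ω => f ω t) →
      (∀ ω, ContinuousOn (f ω) (Set.Icc (0 : ℝ) T)) →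
      ∀ K : ℝ, 0 < K → ∀ m n : ℕ, 1 ≤ n → n ≤ m →
      (∫ ω, (⨆ t : Set.Icc (0 : ℝ) T,
            |∑ j ∈ Finset.Icc 1 ⌊(n : ℝ) * (t : ℝ)⌋₊,
              ∑ i ∈ (Finset.Icc 1 ⌊(m : ℝ) * T⌋₊).filter
                  (fun i : ℕ => ((j : ℝ) - 1) / n ≤ (i : ℝ) / m ∧ (i : ℝ) / m < (j : ℝ) / n),
                (f ω ((i : ℝ) / m) - f ω (((j : ℝ) - 1) / n)) * ξ m i ω|) *
          Set.indicator {ω' : Ω | ∀ u ∈ Set.Icc (0 : ℝ) T, ∀ v ∈ Set.Icc (0 : ℝ) T,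
              |f ω' u - f ω' v| ≤ K * |u - v| ^ α} (fun _ => (1 : ℝ)) ω ∂μ)
        ≤ C * K * (n : ℝ) ^ (1 / 2 - α) :=
  stmt_12_general T α C₀ hT hα hC₀
end
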